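/- arXiv:math-ph/0702025 — 5 statements merged into one kernel-verified Lean document; each statement's English description precedes it below -/
import Mathlib

section
/- The gauge mode θ(ρ) = 2ρ/(1+ρ²) is a solution of the eigenvalue equation u'' + (2/ρ - 2λρ/(1-ρ²))u' - (2cos(2f₀)/(ρ²(1-ρ²)) + λ(1+λ)/(1-ρ²))u = 0 with λ = 1, where f₀(ρ) = 2·arctan(ρ), for all ρ ∈ (0,1). -/
noncomputable def f₀ : ℝ → ℝ := fun ρ => 2 * Real.arctan ρ

noncomputable def θ : ℝ → ℝ := fun ρ => 2 * ρ / (1 + ρ^2)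

/-! θ = ρ f₀' is the instability generated by the time-translation symmetry of the blow-up
profile (moving the blow-up time multiplies a perturbation by e^τ), hence λ = 1. Since
cos 2f₀ = 2 cos²(2 arctan ρ) - 1 is rational in ρ, as are θ' and θ'', the equation is a polynomial
identity once the denominators are cleared. -/

open Real

theorem Real.cos_two_mul_arctan (x : ℝ) : cos (2 * arctan x) = (1 - x ^ 2) / (1 + x ^ 2) := by
  rw [cos_two_mul, cos_sq_arctan]
  field_simp
  ring

theorem cos_two_mul_f₀ (x : ℝ) :
    cos (2 * f₀ x) = (1 - 6 * x ^ 2 + x ^ 4) / (1 + x ^ 2) ^ 2 := by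
  rw [f₀, cos_two_mul, cos_two_mul_arctan]
  field_simp
  ring

theorem hasDerivAt_θ (x : ℝ) : HasDerivAt θ (2 * (1 - x ^ 2) / (1 + x ^ 2) ^ 2) x := by
  have hx : 1 + x ^ 2 ≠ 0 := by positivity
  refine (((hasDerivAt_id' x).const_mul 2).div ((hasDerivAt_pow 2 x).const_add 1) hx).congr_deriv ?_
  field_simp
  ring

theorem deriv_θ : deriv θ = fun x => 2 * (1 - x ^ 2) / (1 + x ^ 2) ^ 2 :=
  funext fun x => (hasDerivAt_θ x).deriv

theorem hasDerivAt_deriv_θ (x : ℝ) :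
    HasDerivAt (deriv θ) (4 * x * (x ^ 2 - 3) / (1 + x ^ 2) ^ 3) x := by
  have hx : (1 + x ^ 2) ^ 2 ≠ 0 := by positivity
  rw [deriv_θ]
  refine ((((hasDerivAt_pow 2 x).const_sub 1).const_mul 2).div
    (((hasDerivAt_pow 2 x).const_add 1).pow 2) hx).congr_deriv ?_
  simp only [Pi.pow_apply]
  field_simp
  ring

theorem gauge_mode_solves_eigenvalue_eq (ρ : ℝ) (hρ : ρ ∈ Set.Ioo (0:ℝ) 1) :
    deriv (deriv θ) ρ + (2 / ρ - 2 * 1 * ρ / (1 - ρ^2)) * deriv θ ρ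
      - (2 * Real.cos (2 * f₀ ρ) / (ρ^2 * (1 - ρ^2)) + 1 * (1 + 1) / (1 - ρ^2)) * θ ρ = 0 := by
  obtain ⟨hρ_pos, hρ_lt_one⟩ := hρ
  have hρ_ne : ρ ≠ 0 := hρ_pos.ne'
  have h_one_sub_ne : 1 - ρ ^ 2 ≠ 0 := by nlinarith
  rw [(hasDerivAt_deriv_θ ρ).deriv, deriv_θ, cos_two_mul_f₀, θ]
  field_simp
  ring
end

section
/- Let λ ∈ ℝ, and let u be a real C² solution on [0,1) of u'' + (2/ρ - 2λρ/(1-ρ²))u' - (2cos(2f₀)/(ρ²(1-ρ²)) + λ(1+λ)/(1-ρ²))u = 0 with u(0) = 0 and u'(0) > 0. Then u(ρ) > 0 for all ρ ∈ (0,1). -/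
/-!
The gauge mode θ(ρ) = 2ρ/(1+ρ²) solves the λ = 1 equation. For a solution u of the λ-equation,
the weighted quotient F = t u/θ with t = (1-ρ²)^((λ-1)/2) satisfies a Sturm–Liouville equation
(P F')' = Q F with P = ρ²(1-ρ²)θ² > 0 and Q = (λ-1)²ρ²θ²/(1-ρ²) ≥ 0, the sign of Q coming from
p_λ - p₁ = (λ-1)²/(1-ρ²)². Since P F' → 0 at ρ = 0 and u'(0) > 0 makes F positive near 0, up to a
first zero of F the flux P F' increases from 0, so F increases and cannot reach zero.
-/

open Set Filter Topology

theorem eventually_nhdsGT_lt_of_hasDerivWithinAt_pos {f : ℝ → ℝ} {f' a : ℝ}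
    (hf : HasDerivWithinAt f f' (Ioi a) a) (hf' : 0 < f') : ∀ᶠ x in 𝓝[>] a, f a < f x := by
  filter_upwards [((hasDerivWithinAt_iff_tendsto_slope' (lt_irrefl a)).1 hf).eventually
    (lt_mem_nhds hf'), self_mem_nhdsWithin] with x hslope hx
  rw [slope_def_field] at hslope
  exact sub_pos.1 ((div_pos_iff_of_pos_right (sub_pos.2 hx)).1 hslope)

theorem pos_of_flux_tendsto_zero {a c : ℝ} {F F' E Q : ℝ → ℝ}
    (hF : ∀ x ∈ Ioo a c, HasDerivAt F (F' x) x)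
    (hF' : ∀ x ∈ Ioo a c, 0 ≤ E x → 0 ≤ F' x)
    (hE : ∀ x ∈ Ioo a c, HasDerivAt E (Q x * F x) x)
    (hQ : ∀ x ∈ Ioo a c, 0 ≤ Q x)
    (hE_lim : Tendsto E (𝓝[>] a) (𝓝 0))
    (hF_pos : ∀ᶠ x in 𝓝[>] a, 0 < F x) {x : ℝ} (hx : x ∈ Ioo a c) : 0 < F x := by
  by_contra! hFx
  obtain ⟨δ, hδ, hδ_sub⟩ :=
    mem_nhdsGT_iff_exists_Ioc_subset.1 (hF_pos.and (Ioo_mem_nhdsGT hx.1))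
  obtain ⟨hFδ, hδx⟩ := hδ_sub ⟨hδ, le_rfl⟩
  have hIcc : Icc δ x ⊆ Ioo a c := fun y hy => ⟨hδ.trans_le hy.1, hy.2.trans_lt hx.2⟩
  have hF_cont : ContinuousOn F (Icc δ x) := fun y hy =>
    (hF y (hIcc hy)).continuousAt.continuousWithinAt
  obtain ⟨z, ⟨hz, hFz⟩, hz_least⟩ := (isCompact_Icc.of_isClosed_subset
    (hF_cont.preimage_isClosed_of_isClosed isClosed_Icc isClosed_Iic)
    inter_subset_left).exists_isLeast ⟨x, ⟨hδx.2.le, le_rfl⟩, hFx⟩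
  have hza : Ioo a z ⊆ Ioo a c := fun y hy => ⟨hy.1, hy.2.trans (hz.2.trans_lt hx.2)⟩
  have hF_pos_before : ∀ y ∈ Ioo a z, 0 < F y := by
    intro y hy
    by_contra! hFy
    rcases le_or_gt y δ with hyδ | hδy
    · exact hFy.not_gt (hδ_sub ⟨hy.1, hyδ⟩).1
    · exact hy.2.not_ge (hz_least ⟨⟨hδy.le, hy.2.le.trans hz.2⟩, hFy⟩)
  have hE_mono : MonotoneOn E (Ioo a z) := by
    refine monotoneOn_of_hasDerivWithinAt_nonneg (f' := fun y => Q y * F y) (convex_Ioo a z)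
      (fun y hy => (hE y (hza hy)).continuousAt.continuousWithinAt) ?_ ?_ <;> rw [interior_Ioo]
    · exact fun y hy => (hE y (hza hy)).hasDerivWithinAt
    · exact fun y hy => mul_nonneg (hQ y (hza hy)) (hF_pos_before y hy).le
  have hE_nonneg : ∀ y ∈ Ioo a z, 0 ≤ E y := fun y hy =>
    le_of_tendsto hE_lim <| by
      filter_upwards [Ioo_mem_nhdsGT hy.1] with w hw using
        hE_mono ⟨hw.1, hw.2.trans hy.2⟩ hy hw.2.le
  have hF_mono : MonotoneOn F (Icc δ z) := by
    refine monotoneOn_of_hasDerivWithinAt_nonneg (f' := F') (convex_Icc δ z)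
      (hF_cont.mono (Icc_subset_Icc_right hz.2)) ?_ ?_ <;> rw [interior_Icc]
    · exact fun y hy => (hF y (hza ⟨hδ.trans hy.1, hy.2⟩)).hasDerivWithinAt
    · exact fun y hy => hF' y (hza ⟨hδ.trans hy.1, hy.2⟩) (hE_nonneg y ⟨hδ.trans hy.1, hy.2⟩)
  exact hFδ.not_ge ((hF_mono ⟨le_rfl, hz.1⟩ ⟨hz.1, le_rfl⟩ hz.1).trans hFz)

theorem ContDiffOn.tendsto_deriv_nhdsGT {f : ℝ → ℝ} {a b : ℝ} (hf : ContDiffOn ℝ 1 f (Ico a b))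
    (hab : a < b) : Tendsto (deriv f) (𝓝[>] a) (𝓝 (derivWithin f (Ico a b) a)) := by
  have h := (hf.continuousOn_derivWithin (uniqueDiffOn_Ico a b) le_rfl a ⟨le_rfl, hab⟩)
    |>.mono_of_mem_nhdsWithin (mem_of_superset (Ioo_mem_nhdsGT hab) Ioo_subset_Ico_self)
  refine h.tendsto.congr' ?_
  filter_upwards [Ioo_mem_nhdsGT hab] with x hx using
    derivWithin_of_mem_nhds (Ico_mem_nhds_iff.2 hx)

theorem cos_two_f₀ (ρ : ℝ) : Real.cos (2 * f₀ ρ) = (1 - 6 * ρ ^ 2 + ρ ^ 4) / (1 + ρ ^ 2) ^ 2 := by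
  have hρ : 0 < 1 + ρ ^ 2 := by positivity
  have hcos : Real.cos (2 * Real.arctan ρ) = (1 - ρ ^ 2) / (1 + ρ ^ 2) := by
    rw [Real.cos_two_mul, Real.cos_arctan, div_pow, one_pow, Real.sq_sqrt hρ.le]
    field_simp
    ring
  rw [f₀, mul_left_comm, Real.cos_two_mul, hcos]
  field_simp
  ring

noncomputable def gaugeMode (ρ : ℝ) : ℝ := 2 * ρ / (1 + ρ ^ 2)

theorem gaugeMode_pos {ρ : ℝ} (hρ : 0 < ρ) : 0 < gaugeMode ρ := by
  unfold gaugeMode; positivity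

theorem hasDerivAt_gaugeMode (ρ : ℝ) :
    HasDerivAt gaugeMode (2 * (1 - ρ ^ 2) / (1 + ρ ^ 2) ^ 2) ρ := by
  have h := ((hasDerivAt_id' ρ).const_mul 2).div ((hasDerivAt_pow 2 ρ).const_add 1)
    (by positivity : 1 + ρ ^ 2 ≠ 0)
  refine h.congr_deriv ?_
  field_simp
  ring

theorem deriv_gaugeMode : deriv gaugeMode = fun ρ => 2 * (1 - ρ ^ 2) / (1 + ρ ^ 2) ^ 2 :=
  funext fun ρ => (hasDerivAt_gaugeMode ρ).deriv

theorem hasDerivAt_deriv_gaugeMode (ρ : ℝ) :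
    HasDerivAt (deriv gaugeMode) (-4 * ρ * (3 - ρ ^ 2) / (1 + ρ ^ 2) ^ 3) ρ := by
  rw [deriv_gaugeMode]
  have h := (((hasDerivAt_pow 2 ρ).const_sub 1).const_mul 2).div
    (((hasDerivAt_pow 2 ρ).const_add 1).fun_pow 2) (by positivity : (1 + ρ ^ 2) ^ 2 ≠ 0)
  refine h.congr_deriv ?_
  field_simp
  ring

noncomputable def integratingFactor (lam ρ : ℝ) : ℝ := (1 - ρ ^ 2) ^ ((lam - 1) / 2)

theorem integratingFactor_pos (lam : ℝ) {ρ : ℝ} (hρ : ρ ∈ Ioo (-1 : ℝ) 1) :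
    0 < integratingFactor lam ρ :=
  Real.rpow_pos_of_pos (by nlinarith [hρ.1, hρ.2]) _

theorem hasDerivAt_integratingFactor (lam : ℝ) {ρ : ℝ} (hρ : ρ ∈ Ioo (-1 : ℝ) 1) :
    HasDerivAt (integratingFactor lam)
      (-(lam - 1) * ρ / (1 - ρ ^ 2) * integratingFactor lam ρ) ρ := by
  have hpos : 0 < 1 - ρ ^ 2 := by nlinarith [hρ.1, hρ.2]
  have h := ((hasDerivAt_pow 2 ρ).const_sub 1).rpow_const (p := (lam - 1) / 2) (Or.inl hpos.ne')
  refine h.congr_deriv ?_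
  rw [integratingFactor, Real.rpow_sub hpos, Real.rpow_one]
  field_simp
  ring

noncomputable def linearizedOperator (lam : ℝ) (u : ℝ → ℝ) (ρ : ℝ) : ℝ :=
  deriv (deriv u) ρ + (2 / ρ - 2 * lam * ρ / (1 - ρ ^ 2)) * deriv u ρ
    - (2 * Real.cos (2 * f₀ ρ) / (ρ ^ 2 * (1 - ρ ^ 2)) + lam * (1 + lam) / (1 - ρ ^ 2)) * u ρ

theorem linearizedOperator_one_gaugeMode {ρ : ℝ} (hρ : ρ ≠ 0) (hρ' : 1 - ρ ^ 2 ≠ 0) :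
    linearizedOperator 1 gaugeMode ρ = 0 := by
  rw [linearizedOperator, (hasDerivAt_deriv_gaugeMode ρ).deriv]
  simp only [deriv_gaugeMode, cos_two_f₀, gaugeMode]
  field_simp
  ring

noncomputable def weightedQuotient (lam : ℝ) (u θ : ℝ → ℝ) (ρ : ℝ) : ℝ :=
  u ρ * integratingFactor lam ρ / θ ρ

noncomputable def wronskianFlux (lam : ℝ) (u θ : ℝ → ℝ) (ρ : ℝ) : ℝ :=
  ρ ^ 2 * integratingFactor lam ρ *
    ((1 - ρ ^ 2) * (deriv u ρ * θ ρ - u ρ * deriv θ ρ) - (lam - 1) * ρ * u ρ * θ ρ)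

section Flux

variable {lam ρ : ℝ} {u θ : ℝ → ℝ}

theorem hasDerivAt_weightedQuotient (hρ : ρ ∈ Ioo (0 : ℝ) 1) (hu : DifferentiableAt ℝ u ρ)
    (hθ : DifferentiableAt ℝ θ ρ) (hθ₀ : θ ρ ≠ 0) :
    HasDerivAt (weightedQuotient lam u θ)
      (wronskianFlux lam u θ ρ / (ρ ^ 2 * (1 - ρ ^ 2) * θ ρ ^ 2)) ρ := by
  have hρ₀ : ρ ≠ 0 := hρ.1.ne'
  have hρ₁ : 1 - ρ ^ 2 ≠ 0 := by nlinarith [hρ.1, hρ.2]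
  have h := (hu.hasDerivAt.mul (hasDerivAt_integratingFactor lam ⟨by linarith [hρ.1], hρ.2⟩)).div
    hθ.hasDerivAt hθ₀
  refine h.congr_deriv ?_
  rw [wronskianFlux, Pi.mul_apply]
  field_simp
  ring

theorem hasDerivAt_wronskianFlux (hρ : ρ ∈ Ioo (0 : ℝ) 1) (hu : DifferentiableAt ℝ u ρ)
    (hu' : DifferentiableAt ℝ (deriv u) ρ) (hθ : DifferentiableAt ℝ θ ρ)
    (hθ' : DifferentiableAt ℝ (deriv θ) ρ) (hθ₀ : θ ρ ≠ 0)
    (hLu : linearizedOperator lam u ρ = 0) (hLθ : linearizedOperator 1 θ ρ = 0) :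
    HasDerivAt (wronskianFlux lam u θ)
      ((lam - 1) ^ 2 * ρ ^ 2 * θ ρ ^ 2 / (1 - ρ ^ 2) * weightedQuotient lam u θ ρ) ρ := by
  have hρ₀ : ρ ≠ 0 := hρ.1.ne'
  have hρ₁ : 1 - ρ ^ 2 ≠ 0 := by nlinarith [hρ.1, hρ.2]
  have ht := hasDerivAt_integratingFactor lam ⟨by linarith [hρ.1], hρ.2⟩
  have hW := (hu'.hasDerivAt.mul hθ.hasDerivAt).sub (hu.hasDerivAt.mul hθ'.hasDerivAt)
  have h := (((hasDerivAt_pow 2 ρ).mul ht).mul ((((hasDerivAt_pow 2 ρ).const_sub 1).mul hW).sub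
    ((((hasDerivAt_id' ρ).const_mul (lam - 1)).mul hu.hasDerivAt).mul hθ.hasDerivAt)))
  refine h.congr_deriv ?_
  rw [linearizedOperator] at hLu hLθ
  -- the potential term 2 cos(2 f₀)/(ρ²(1-ρ²)) is common to both equations and cancels
  have hu'' : deriv (deriv u) ρ = -((2 / ρ - 2 * lam * ρ / (1 - ρ ^ 2)) * deriv u ρ) +
      (2 * Real.cos (2 * f₀ ρ) / (ρ ^ 2 * (1 - ρ ^ 2)) + lam * (1 + lam) / (1 - ρ ^ 2)) * u ρ := by
    linarith
  have hθ'' : deriv (deriv θ) ρ = -((2 / ρ - 2 * ρ / (1 - ρ ^ 2)) * deriv θ ρ) +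
      (2 * Real.cos (2 * f₀ ρ) / (ρ ^ 2 * (1 - ρ ^ 2)) + 2 / (1 - ρ ^ 2)) * θ ρ := by
    linarith
  have hθF : θ ρ ^ 2 * weightedQuotient lam u θ ρ = θ ρ * (u ρ * integratingFactor lam ρ) := by
    rw [sq, mul_assoc, weightedQuotient, mul_div_cancel₀ _ hθ₀]
  have hQF : (lam - 1) ^ 2 * ρ ^ 2 * θ ρ ^ 2 / (1 - ρ ^ 2) * weightedQuotient lam u θ ρ =
      (lam - 1) ^ 2 * ρ ^ 2 / (1 - ρ ^ 2) * (θ ρ * (u ρ * integratingFactor lam ρ)) := by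
    rw [← hθF]; ring
  rw [hQF, hu'', hθ'']
  simp only [Pi.mul_apply, Pi.sub_apply]
  field_simp
  ring

end Flux

theorem tendsto_wronskianFlux_nhdsGT_zero (lam : ℝ) {u θ : ℝ → ℝ} {u₀ u₁ θ₀ θ₁ : ℝ}
    (hu : Tendsto u (𝓝[>] 0) (𝓝 u₀)) (hu' : Tendsto (deriv u) (𝓝[>] 0) (𝓝 u₁))
    (hθ : Tendsto θ (𝓝[>] 0) (𝓝 θ₀)) (hθ' : Tendsto (deriv θ) (𝓝[>] 0) (𝓝 θ₁)) :
    Tendsto (wronskianFlux lam u θ) (𝓝[>] 0) (𝓝 0) := by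
  have hρ : Tendsto (fun ρ : ℝ => ρ) (𝓝[>] 0) (𝓝 0) := nhdsWithin_le_nhds
  have ht : Tendsto (integratingFactor lam) (𝓝[>] 0) (𝓝 (integratingFactor lam 0)) :=
    ((hasDerivAt_integratingFactor lam (by norm_num)).continuousAt.tendsto).mono_left
      nhdsWithin_le_nhds
  have h := ((hρ.pow 2).mul ht).mul
    ((((tendsto_const_nhds (x := (1 : ℝ))).sub (hρ.pow 2)).mul ((hu'.mul hθ).sub (hu.mul hθ'))).sub
      ((((tendsto_const_nhds (x := lam - 1)).mul hρ).mul hu).mul hθ))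
  simp only [ne_eq, OfNat.ofNat_ne_zero, not_false_eq_true, zero_pow, zero_mul] at h
  exact h

theorem weightedQuotient_gaugeMode_pos_iff {lam ρ : ℝ} {u : ℝ → ℝ} (hρ : ρ ∈ Ioo (0 : ℝ) 1) :
    0 < weightedQuotient lam u gaugeMode ρ ↔ 0 < u ρ := by
  rw [weightedQuotient, div_pos_iff_of_pos_right (gaugeMode_pos hρ.1),
    mul_pos_iff_of_pos_right (integratingFactor_pos lam ⟨by linarith [hρ.1], hρ.2⟩)]

theorem pos_of_linearizedOperator_eq_zero {lam u₀ u₁ : ℝ} {u : ℝ → ℝ}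
    (hu : ∀ x ∈ Ioo (0 : ℝ) 1, DifferentiableAt ℝ u x)
    (hu' : ∀ x ∈ Ioo (0 : ℝ) 1, DifferentiableAt ℝ (deriv u) x)
    (hLu : ∀ x ∈ Ioo (0 : ℝ) 1, linearizedOperator lam u x = 0)
    (hu_lim : Tendsto u (𝓝[>] 0) (𝓝 u₀)) (hu'_lim : Tendsto (deriv u) (𝓝[>] 0) (𝓝 u₁))
    (hu_pos : ∀ᶠ x in 𝓝[>] 0, 0 < u x) {ρ : ℝ} (hρ : ρ ∈ Ioo (0 : ℝ) 1) : 0 < u ρ := by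
  have hθ₀ : ∀ x ∈ Ioo (0 : ℝ) 1, gaugeMode x ≠ 0 := fun x hx => (gaugeMode_pos hx.1).ne'
  refine (weightedQuotient_gaugeMode_pos_iff hρ).1 <| pos_of_flux_tendsto_zero
    (fun x hx => hasDerivAt_weightedQuotient hx (hu x hx)
      (hasDerivAt_gaugeMode x).differentiableAt (hθ₀ x hx))
    (fun x hx hE => div_nonneg hE <|
      mul_nonneg (mul_nonneg (sq_nonneg x) (by nlinarith [hx.1, hx.2])) (sq_nonneg _))
    (fun x hx => hasDerivAt_wronskianFlux hx (hu x hx) (hu' x hx)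
      (hasDerivAt_gaugeMode x).differentiableAt (hasDerivAt_deriv_gaugeMode x).differentiableAt
      (hθ₀ x hx) (hLu x hx) (linearizedOperator_one_gaugeMode hx.1.ne' (by nlinarith [hx.1, hx.2])))
    (fun x hx => div_nonneg (by positivity) (by nlinarith [hx.1, hx.2]))
    (tendsto_wronskianFlux_nhdsGT_zero lam hu_lim hu'_lim
      ((hasDerivAt_gaugeMode 0).continuousAt.tendsto.mono_left nhdsWithin_le_nhds)
      ((hasDerivAt_deriv_gaugeMode 0).continuousAt.tendsto.mono_left nhdsWithin_le_nhds)) ?_ hρ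
  filter_upwards [hu_pos, Ioo_mem_nhdsGT one_pos] with x hux hx
  exact (weightedQuotient_gaugeMode_pos_iff hx).2 hux

theorem no_zeros_of_eigenfunction (lam : ℝ) (u : ℝ → ℝ)
    (hu : ContDiffOn ℝ 2 u (Set.Ico (0:ℝ) 1))
    (heq : ∀ ρ ∈ Set.Ioo (0:ℝ) 1,
      deriv (deriv u) ρ + (2 / ρ - 2 * lam * ρ / (1 - ρ^2)) * deriv u ρ
        - (2 * Real.cos (2 * f₀ ρ) / (ρ^2 * (1 - ρ^2)) + lam * (1 + lam) / (1 - ρ^2)) * u ρ = 0)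
    (h0 : u 0 = 0)
    (h0' : 0 < derivWithin u (Set.Ico (0:ℝ) 1) 0) :
    ∀ ρ ∈ Set.Ioo (0:ℝ) 1, 0 < u ρ := by
  have hu_at : ∀ x ∈ Ioo (0 : ℝ) 1, ContDiffAt ℝ 2 u x := fun x hx =>
    hu.contDiffAt (Ico_mem_nhds_iff.2 hx)
  have hIco : Ico (0 : ℝ) 1 ∈ 𝓝[>] 0 :=
    mem_of_superset (Ioo_mem_nhdsGT one_pos) Ioo_subset_Ico_self
  have hu_slope : HasDerivWithinAt u (derivWithin u (Ico 0 1) 0) (Ioi 0) 0 :=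
    (hu.differentiableOn (by norm_num) 0 ⟨le_rfl, one_pos⟩).hasDerivWithinAt
      |>.mono_of_mem_nhdsWithin hIco
  refine fun ρ hρ => pos_of_linearizedOperator_eq_zero
    (fun x hx => (hu_at x hx).differentiableAt (by norm_num))
    (fun x hx => ((hu_at x hx).derivWithin (m := 1) (by norm_num)).differentiableAt (by norm_num))
    heq ((hu.continuousOn 0 ⟨le_rfl, one_pos⟩).mono_of_mem_nhdsWithin hIco).tendsto
    ((hu.of_le (by norm_num)).tendsto_deriv_nhdsGT one_pos) ?_ hρ
  simpa only [h0] using eventually_nhdsGT_lt_of_hasDerivWithinAt_pos hu_slope h0'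
end

section
/- Let λ > -2, λ ≠ 1, and let u be a real C¹ function on [0,1] with u(0) = 0, u'(ρ) ≥ 0 on [0,1), and u not identically zero, satisfying ∫₀¹ (θ(ρ)/W(θ,χ)(ρ)) · (1/(1-ρ²)) · (2(λ-1)ρu'(ρ) + (λ(1+λ)-2)u(ρ)) dρ = 0, where θ(ρ)/W(θ,χ)(ρ) = -(ρ³(1-ρ²))/(3(1+ρ²)). Then we obtain a contradiction; in particular no such u exists. -/
/-!
Since `λ(1+λ) - 2 = (λ-1)(λ+2)`, the factor `1 - ρ²` cancels and the integral equals
`-(λ-1)/3 · ∫₀¹ ρ³/(1+ρ²) · (2ρu' + (λ+2)u)`. As `u' ≥ 0` and `u(0) = 0`, `u` is nondecreasing and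
nonnegative with `u(1) > 0`, so for `λ > -2` the last integrand is continuous, nonnegative and positive
at `ρ = 1`; its integral is positive, contradicting `λ ≠ 1`.
-/

open Set intervalIntegral

theorem ContDiffOn.monotoneOn_Icc_of_deriv_nonneg {u : ℝ → ℝ} {a b : ℝ}
    (hu : ContDiffOn ℝ 1 u (Icc a b)) (hderiv : ∀ x ∈ Ioo a b, 0 ≤ deriv u x) :
    MonotoneOn u (Icc a b) := by
  refine monotoneOn_of_deriv_nonneg (convex_Icc a b) hu.continuousOn ?_ (by rwa [interior_Icc])
  rw [interior_Icc]
  exact fun x hx => ((hu.differentiableOn one_ne_zero x (Ioo_subset_Icc_self hx)).differentiableAt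
    (Icc_mem_nhds hx.1 hx.2)).differentiableWithinAt

theorem MonotoneOn.nonneg_of_left_eq_zero {u : ℝ → ℝ} {a b : ℝ} (hu : MonotoneOn u (Icc a b))
    (ha : u a = 0) {x : ℝ} (hx : x ∈ Icc a b) : 0 ≤ u x :=
  ha ▸ hu (left_mem_Icc.2 (hx.1.trans hx.2)) hx hx.1

theorem MonotoneOn.pos_right_of_left_eq_zero {u : ℝ → ℝ} {a b : ℝ} (hu : MonotoneOn u (Icc a b))
    (ha : u a = 0) (hne : ∃ x ∈ Icc a b, u x ≠ 0) : 0 < u b := by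
  obtain ⟨x, hx, hux⟩ := hne
  exact (lt_of_le_of_ne (hu.nonneg_of_left_eq_zero ha hx) hux.symm).trans_le
    (hu hx (right_mem_Icc.2 (hx.1.trans hx.2)) hx.2)

theorem weighted_integrand_eq (lam ρ d w : ℝ) (hρ : 1 - ρ ^ 2 ≠ 0) :
    (-(ρ ^ 3 * (1 - ρ ^ 2)) / (3 * (1 + ρ ^ 2))) * (1 / (1 - ρ ^ 2))
        * (2 * (lam - 1) * ρ * d + (lam * (1 + lam) - 2) * w)
      = -(lam - 1) / 3 * (ρ ^ 3 / (1 + ρ ^ 2) * (2 * ρ * d + (lam + 2) * w)) := by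
  have : 1 + ρ ^ 2 ≠ 0 := by positivity
  field_simp
  ring

/-- `derivWithin` rather than `deriv`: it is continuous up to the endpoints, where `deriv u` may be a
junk value. -/
theorem integral_weighted_pos {c : ℝ} (hc : 0 < c) {u : ℝ → ℝ} (hu : ContDiffOn ℝ 1 u (Icc 0 1))
    (humono : MonotoneOn u (Icc 0 1)) (h0 : u 0 = 0) (hne : ∃ x ∈ Icc (0:ℝ) 1, u x ≠ 0) :
    0 < ∫ ρ in (0:ℝ)..1,
      ρ ^ 3 / (1 + ρ ^ 2) * (2 * ρ * derivWithin u (Icc 0 1) ρ + c * u ρ) := by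
  set v := derivWithin u (Icc 0 1)
  have hv_nonneg : ∀ x, 0 ≤ v x := fun x => humono.derivWithin_nonneg
  have hcont : ContinuousOn (fun ρ => ρ ^ 3 / (1 + ρ ^ 2) * (2 * ρ * v ρ + c * u ρ)) (Icc 0 1) :=
    (ContinuousOn.div (by fun_prop) (by fun_prop) fun x _ => by positivity).mul
      (((continuousOn_const.mul continuousOn_id).mul
        (hu.continuousOn_derivWithin (uniqueDiffOn_Icc one_pos) le_rfl)).add
        (continuousOn_const.mul hu.continuousOn))
  have hnonneg : ∀ x ∈ Ioc (0:ℝ) 1, 0 ≤ x ^ 3 / (1 + x ^ 2) * (2 * x * v x + c * u x) :=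
    fun x hx => by
      have := humono.nonneg_of_left_eq_zero h0 (Ioc_subset_Icc_self hx)
      have := mul_nonneg hx.1.le (hv_nonneg x)
      exact mul_nonneg (by have := hx.1; positivity) (by nlinarith)
  have hone : 0 < (1:ℝ) ^ 3 / (1 + 1 ^ 2) * (2 * 1 * v 1 + c * u 1) := by
    have := hv_nonneg 1
    have := humono.pos_right_of_left_eq_zero h0 hne
    nlinarith
  simpa using integral_lt_integral_of_continuousOn_of_le_of_exists_lt one_pos
    continuousOn_const hcont hnonneg ⟨1, right_mem_Icc.2 zero_le_one, hone⟩

theorem integral_identity_contradiction (lam : ℝ) (h2 : -2 < lam) (h1 : lam ≠ 1)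
    (u : ℝ → ℝ)
    (hu : ContDiffOn ℝ 1 u (Set.Icc (0:ℝ) 1))
    (h0 : u 0 = 0)
    (hmono : ∀ ρ ∈ Set.Ico (0:ℝ) 1, 0 ≤ deriv u ρ)
    (hne : ∃ ρ ∈ Set.Icc (0:ℝ) 1, u ρ ≠ 0)
    (hint : ∫ ρ in (0:ℝ)..1,
        (-(ρ^3 * (1 - ρ^2)) / (3 * (1 + ρ^2))) * (1 / (1 - ρ^2))
          * (2 * (lam - 1) * ρ * deriv u ρ + (lam * (1 + lam) - 2) * u ρ) = 0) :
    False := by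
  have humono : MonotoneOn u (Icc 0 1) :=
    hu.monotoneOn_Icc_of_deriv_nonneg fun x hx => hmono x ⟨hx.1.le, hx.2⟩
  have hpos := integral_weighted_pos (by linarith : 0 < lam + 2) hu humono h0 hne
  have hreduce : ∫ ρ in (0:ℝ)..1, (-(ρ^3 * (1 - ρ^2)) / (3 * (1 + ρ^2))) * (1 / (1 - ρ^2))
        * (2 * (lam - 1) * ρ * deriv u ρ + (lam * (1 + lam) - 2) * u ρ)
      = -(lam - 1) / 3 * ∫ ρ in (0:ℝ)..1,
          ρ ^ 3 / (1 + ρ ^ 2) * (2 * ρ * derivWithin u (Icc 0 1) ρ + (lam + 2) * u ρ) := by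
    rw [← integral_const_mul]
    refine integral_congr_Ioo_of_le zero_le_one fun x hx => ?_
    rw [weighted_integrand_eq _ _ _ _ (by nlinarith [hx.1, hx.2]),
      derivWithin_of_mem_nhds (Icc_mem_nhds hx.1 hx.2)]
  have hcoef : -(lam - 1) / 3 ≠ 0 := div_ne_zero (neg_ne_zero.2 (sub_ne_zero.2 h1)) three_ne_zero
  exact mul_ne_zero hcoef hpos.ne' (hreduce ▸ hint)
end

section
/- For Re λ > 0 and ψ(ρ) = ∫_c^ρ dξ/(ξ²(1-ξ²)^λ), the function α(ρ) = ∫_ρ¹ |ψ(ξ)q(ξ)/ψ'(ξ)|dξ + |ψ(ρ)|∫_ρ¹ |q(ξ)/ψ'(ξ)|dξ, where q(ρ) = λ(1+λ)/(1-ρ²) + 2cos(2f₀(ρ))/(ρ²(1-ρ²)), satisfies lim_{ρ→1⁻} α(ρ) = 0. -/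
open MeasureTheory Set Filter Real intervalIntegral
open scoped Topology

noncomputable def Fp (a c : ℝ) : ℝ → ℝ := fun ρ => ∫ t in c..ρ, (1 - t) ^ (-a)

lemma wcont {a : ℝ} : ContinuousOn (fun t : ℝ => (1 - t) ^ (-a)) (Iio 1) := by
  apply ContinuousOn.rpow_const (by fun_prop)
  intro x hx
  exact Or.inl (by simp only [mem_Iio] at hx; intro h; rw [sub_eq_zero] at h; linarith)

lemma wint {a u v : ℝ} (hu : u < 1) (hv : v < 1) :
    IntervalIntegrable (fun t : ℝ => (1 - t) ^ (-a)) volume u v := by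
  apply (wcont.mono ?_).intervalIntegrable
  intro x hx
  rw [mem_uIcc] at hx
  rcases hx with h | h
  · exact lt_of_le_of_lt h.2 hv
  · exact lt_of_le_of_lt h.2 hu

lemma Fp_nonneg {a c ρ : ℝ} (hc : c ≤ ρ) (hρ : ρ ≤ 1) : 0 ≤ Fp a c ρ := by
  apply intervalIntegral.integral_nonneg hc
  intro u hu
  exact Real.rpow_nonneg (by linarith [hu.2]) _

lemma Fp_contOn {a c b : ℝ} (hc : c < 1) (hb : b < 1) :
    ContinuousOn (Fp a c) (uIcc c b) := by
  apply intervalIntegral.continuousOn_primitive_interval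
  apply (wcont.mono ?_).integrableOn_compact isCompact_uIcc
  intro x hx
  rw [mem_uIcc] at hx
  rcases hx with h | h
  · exact lt_of_le_of_lt h.2 hb
  · exact lt_of_le_of_lt h.2 hc

lemma G_tendsto {a c : ℝ} (ha : 0 < a) (hc : c < 1) :
    Tendsto (fun ρ => (1 - ρ) ^ a * Fp a c ρ) (nhdsWithin 1 (Iio (1:ℝ))) (nhds 0) := by
  rw [Metric.tendsto_nhds]
  intro ε hε
  set σ := max c (1 - ε / 2) with hσdef
  have hσc : c ≤ σ := le_max_left _ _
  have hσ1 : σ < 1 := max_lt hc (by linarith)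
  have h1σ : 1 - σ ≤ ε / 2 := by
    have := le_max_right c (1 - ε / 2); linarith
  have hM0 : 0 ≤ Fp a c σ := Fp_nonneg hσc hσ1.le
  have hpow : Tendsto (fun ρ : ℝ => (1 - ρ) ^ a * Fp a c σ) (nhdsWithin 1 (Iio (1:ℝ))) (nhds 0) := by
    have h1 : Tendsto (fun ρ : ℝ => 1 - ρ) (nhdsWithin 1 (Iio (1:ℝ))) (nhds 0) := by
      have h0 : Tendsto (fun ρ : ℝ => 1 - ρ) (nhds 1) (nhds (1 - 1)) :=
        (continuous_const.sub continuous_id).tendsto 1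
      simpa using h0.mono_left nhdsWithin_le_nhds
    have h2 : Tendsto (fun x : ℝ => x ^ a) (nhds 0) (nhds 0) := by
      have := (Real.continuousAt_rpow_const 0 a (Or.inr ha.le)).tendsto
      simpa [Real.zero_rpow ha.ne'] using this
    have := (h2.comp h1).mul_const (Fp a c σ)
    simpa using this
  have hev1 : ∀ᶠ ρ in nhdsWithin 1 (Iio (1:ℝ)), (1 - ρ) ^ a * Fp a c σ < ε / 2 :=
    hpow (Iio_mem_nhds (by linarith))
  have hev2 : Ioo σ 1 ∈ nhdsWithin 1 (Iio (1:ℝ)) :=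
    Ioo_mem_nhdsLT_of_mem ⟨hσ1, le_rfl⟩
  filter_upwards [hev1, hev2] with ρ h₁ h₂
  have hρσ : σ < ρ := h₂.1
  have hρ1 : ρ < 1 := h₂.2
  have hcρ : c ≤ ρ := hσc.trans hρσ.le
  have h1ρ : (0:ℝ) < 1 - ρ := by linarith
  have hsplit : Fp a c ρ = Fp a c σ + ∫ t in σ..ρ, (1 - t) ^ (-a) :=
    (intervalIntegral.integral_add_adjacent_intervals (wint hc hσ1) (wint hσ1 hρ1)).symm
  have htail : (∫ t in σ..ρ, (1 - t) ^ (-a)) ≤ (ρ - σ) * (1 - ρ) ^ (-a) := by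
    calc (∫ t in σ..ρ, (1 - t) ^ (-a)) ≤ ∫ _t in σ..ρ, (1 - ρ) ^ (-a) := by
          apply intervalIntegral.integral_mono_on hρσ.le (wint hσ1 hρ1) intervalIntegrable_const
          intro t ht
          exact Real.rpow_le_rpow_of_nonpos (by linarith) (by linarith [ht.2]) (by linarith)
      _ = (ρ - σ) * (1 - ρ) ^ (-a) := by simp [intervalIntegral.integral_const, smul_eq_mul]
  have hcancel : (1 - ρ) ^ a * (1 - ρ) ^ (-a) = 1 := by
    rw [Real.rpow_neg h1ρ.le, mul_inv_cancel₀ (ne_of_gt (Real.rpow_pos_of_pos h1ρ a))]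
  have hGle : (1 - ρ) ^ a * Fp a c ρ ≤ (1 - ρ) ^ a * Fp a c σ + (ρ - σ) := by
    have hnn : (0:ℝ) ≤ (1 - ρ) ^ a := Real.rpow_nonneg h1ρ.le a
    calc (1 - ρ) ^ a * Fp a c ρ
        = (1 - ρ) ^ a * Fp a c σ + (1 - ρ) ^ a * ∫ t in σ..ρ, (1 - t) ^ (-a) := by
          rw [hsplit]; ring
      _ ≤ (1 - ρ) ^ a * Fp a c σ + (1 - ρ) ^ a * ((ρ - σ) * (1 - ρ) ^ (-a)) := by
          gcongr
      _ = (1 - ρ) ^ a * Fp a c σ + (ρ - σ) * ((1 - ρ) ^ a * (1 - ρ) ^ (-a)) := by ring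
      _ = (1 - ρ) ^ a * Fp a c σ + (ρ - σ) := by rw [hcancel]; ring
  have hGnn : 0 ≤ (1 - ρ) ^ a * Fp a c ρ :=
    mul_nonneg (Real.rpow_nonneg h1ρ.le a) (Fp_nonneg hcρ hρ1.le)
  rw [Real.dist_eq]
  rw [abs_of_nonneg (by simpa using hGnn)]
  simp only [sub_zero]
  linarith
noncomputable def ψ (lam : ℂ) (c : ℝ) : ℝ → ℂ :=
  fun ρ => ∫ ξ in c..ρ, 1 / ((ξ:ℂ)^2 * ((1 : ℂ) - (ξ:ℂ)^2) ^ lam)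

noncomputable def ψ' (lam : ℂ) : ℝ → ℂ :=
  fun ρ => 1 / ((ρ:ℂ)^2 * ((1 : ℂ) - (ρ:ℂ)^2) ^ lam)

noncomputable def q (lam : ℂ) : ℝ → ℂ := fun ρ =>
  lam * (1 + lam) / ((1 : ℂ) - (ρ:ℂ)^2)
    + (2 * Real.cos (2 * f₀ ρ) : ℝ) / ((ρ:ℂ)^2 * ((1 : ℂ) - (ρ:ℂ)^2))

noncomputable def α (lam : ℂ) (c : ℝ) : ℝ → ℝ := fun ρ =>
  (∫ ξ in ρ..1, ‖ψ lam c ξ * q lam ξ / ψ' lam ξ‖)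
    + ‖ψ lam c ρ‖ * ∫ ξ in ρ..1, ‖q lam ξ / ψ' lam ξ‖
lemma tail_lemma {f : ℝ → ℝ} {ρ I : ℝ} (hρ : ρ < 1) (hnn : ∀ x, 0 ≤ f x)
    (hfi : ∀ b, b ∈ Ico ρ (1:ℝ) → IntegrableOn f (Ioc ρ b) volume)
    (hI : ∀ b, b ∈ Ico ρ (1:ℝ) → (∫ x in Ioc ρ b, f x) ≤ I) :
    (∫ x in ρ..1, f x) ≤ I := by
  set b : ℕ → ℝ := fun n => 1 - (1 - ρ) / (n + 1) with hbdef
  have h1ρ : (0:ℝ) < 1 - ρ := by linarith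
  have hb_mem : ∀ n : ℕ, b n ∈ Ico ρ (1:ℝ) := by
    intro n
    have hn1 : (0:ℝ) < (n:ℝ) + 1 := by positivity
    constructor
    · have h1 : (1 - ρ) / ((n:ℝ) + 1) ≤ 1 - ρ :=
        div_le_self h1ρ.le (by simp [le_add_iff_nonneg_left])
      simp only [hbdef]; linarith
    · have h2 : 0 < (1 - ρ) / ((n:ℝ) + 1) := div_pos h1ρ hn1
      simp only [hbdef]; linarith
  have hb_tend : Tendsto b atTop (nhds 1) := by
    have h1 : Tendsto (fun n : ℕ => ((n:ℝ) + 1)) atTop atTop :=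
      tendsto_atTop_add_const_right atTop 1 tendsto_natCast_atTop_atTop
    have h2 : Tendsto (fun n : ℕ => (1 - ρ) / ((n:ℝ) + 1)) atTop (nhds 0) :=
      Tendsto.div_atTop tendsto_const_nhds h1
    have h3 : Tendsto (fun n : ℕ => 1 - (1 - ρ) / ((n:ℝ) + 1)) atTop (nhds (1 - 0)) :=
      tendsto_const_nhds.sub h2
    simpa using h3
  have hnorm : ∀ (u v : ℝ), (∫ x in Ioc u v, ‖f x‖) = ∫ x in Ioc u v, f x := by
    intro u v
    simp only [show ∀ x, ‖f x‖ = f x from fun x => Real.norm_of_nonneg (hnn x)]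
  have hint : IntegrableOn f (Ioc ρ 1) volume := by
    apply integrableOn_Ioc_of_intervalIntegral_norm_bounded_right (I := I)
      (fun n => hfi _ (hb_mem n)) hb_tend
    filter_upwards with n
    rw [hnorm]
    exact hI _ (hb_mem n)
  have hmono : Monotone fun n : ℕ => Ioc ρ (b n) := by
    intro m n hmn
    apply Ioc_subset_Ioc le_rfl
    have hm1 : (0:ℝ) < (m:ℝ) + 1 := by positivity
    have hmn' : ((m:ℝ) + 1) ≤ (n:ℝ) + 1 := by
      have : (m:ℝ) ≤ (n:ℝ) := Nat.cast_le.mpr hmn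
      linarith
    have : (1 - ρ) / ((n:ℝ) + 1) ≤ (1 - ρ) / ((m:ℝ) + 1) :=
      div_le_div_of_nonneg_left h1ρ.le hm1 hmn'
    simp only [hbdef]; linarith
  have hunion : (⋃ n, Ioc ρ (b n)) = Ioo ρ 1 := by
    apply Subset.antisymm
    · exact iUnion_subset fun n x hx => ⟨hx.1, lt_of_le_of_lt hx.2 (hb_mem n).2⟩
    · intro x hx
      obtain ⟨n, hn⟩ := exists_nat_ge ((1 - ρ) / (1 - x))
      refine mem_iUnion.2 ⟨n, hx.1, ?_⟩
      have h1x : (0:ℝ) < 1 - x := by linarith [hx.2]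
      have hn1 : (0:ℝ) < (n:ℝ) + 1 := by positivity
      have hkey : (1 - ρ) / ((n:ℝ) + 1) ≤ 1 - x := by
        rw [div_le_iff₀ hn1]
        have h5 : (1 - ρ) / (1 - x) ≤ (n:ℝ) + 1 := le_trans hn (by linarith)
        calc 1 - ρ = (1 - ρ) / (1 - x) * (1 - x) := by field_simp
          _ ≤ ((n:ℝ) + 1) * (1 - x) := mul_le_mul_of_nonneg_right h5 h1x.le
          _ = (1 - x) * ((n:ℝ) + 1) := by ring
      simp only [hbdef]; linarith
  have htend := tendsto_setIntegral_of_monotone (μ := volume) (f := f)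
    (fun n : ℕ => measurableSet_Ioc) hmono (by rw [hunion]; exact hint.mono_set Ioo_subset_Ioc_self)
  rw [intervalIntegral.integral_of_le hρ.le, MeasureTheory.integral_Ioc_eq_integral_Ioo]
  rw [hunion] at htend
  exact le_of_tendsto htend (Eventually.of_forall fun n => hI _ (hb_mem n))

lemma int_one_sub_rpow {a ρ b : ℝ} (ha : 0 < a) :
    ∫ ξ in ρ..b, (1 - ξ) ^ (a - 1) = ((1 - ρ) ^ a - (1 - b) ^ a) / a := by
  have h := intervalIntegral.integral_comp_sub_left (a := ρ) (b := b)
    (fun u : ℝ => u ^ (a - 1)) 1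
  rw [h, integral_rpow (Or.inl (by linarith))]
  rw [sub_add_cancel]
lemma F_hasDeriv {a c : ℝ} (hc : c < 1) {x : ℝ} (hx : x < 1) :
    HasDerivAt (Fp a c) ((1 - x) ^ (-a)) x := by
  apply intervalIntegral.integral_hasDerivAt_right (wint hc hx)
    (wcont.stronglyMeasurableAtFilter isOpen_Iio x hx)
    (wcont.continuousAt (Iio_mem_nhds hx))

lemma H_int_le {a c : ℝ} (ha : 0 < a) (hc1 : c < 1) {ρ b : ℝ}
    (hcρ : c ≤ ρ) (hρb : ρ ≤ b) (hb1 : b < 1) :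
    ∫ ξ in ρ..b, Fp a c ξ * (1 - ξ) ^ (a - 1)
      ≤ ((1 - ρ) + (1 - ρ) ^ a * Fp a c ρ) / a := by
  set Φ' : ℝ → ℝ := fun x => a * (1 - x) ^ (a - 1) * (-1) * Fp a c x
      + (1 - x) ^ a * (1 - x) ^ (-a) with hΦ'def
  have hIcc : Icc ρ b ⊆ Iio (1:ℝ) := fun x hx => lt_of_le_of_lt hx.2 hb1
  have hΦderiv : ∀ x ∈ Iio (1:ℝ), HasDerivAt (fun x => (1 - x) ^ a * Fp a c x) (Φ' x) x := by
    intro x hx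
    have h1 : HasDerivAt (fun x : ℝ => 1 - x) (-1) x := (hasDerivAt_id x).const_sub 1
    have hne : (1 : ℝ) - x ≠ 0 := by simp only [mem_Iio] at hx; intro h; rw [sub_eq_zero] at h; linarith
    have h2 : HasDerivAt (fun x : ℝ => (1 - x) ^ a) (a * (1 - x) ^ (a - 1) * (-1)) x :=
      (Real.hasDerivAt_rpow_const (Or.inl hne)).comp x h1
    exact h2.mul (F_hasDeriv hc1 hx)
  have hFpcont : ContinuousOn (Fp a c) (Icc ρ b) := by
    apply (Fp_contOn hc1 hb1).mono
    rw [uIcc_of_le (hcρ.trans hρb)]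
    exact Icc_subset_Icc hcρ le_rfl
  have hrpowcont : ∀ p : ℝ, ContinuousOn (fun x : ℝ => (1 - x) ^ p) (Icc ρ b) := by
    intro p
    apply ContinuousOn.rpow_const (by fun_prop)
    intro x hx
    have : x < 1 := hIcc hx
    exact Or.inl (by intro h; rw [sub_eq_zero] at h; linarith)
  have hΦ'cont : ContinuousOn Φ' (Icc ρ b) := by
    apply ContinuousOn.add
    · exact (((hrpowcont (a-1)).const_smul a).mul continuousOn_const).mul hFpcont
    · exact (hrpowcont a).mul (hrpowcont (-a))
  have hΦ'int : IntervalIntegrable Φ' volume ρ b := by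
    apply hΦ'cont.intervalIntegrable_of_Icc hρb
  have hFTC : ∫ x in ρ..b, Φ' x
      = (1 - b) ^ a * Fp a c b - (1 - ρ) ^ a * Fp a c ρ := by
    apply intervalIntegral.integral_eq_sub_of_hasDerivAt
    · intro x hx
      rw [uIcc_of_le hρb] at hx
      exact hΦderiv x (hIcc hx)
    · exact hΦ'int
  have hEq : EqOn (fun x => Fp a c x * (1 - x) ^ (a - 1))
      (fun x => (1 - Φ' x) / a) (uIcc ρ b) := by
    intro x hx
    rw [uIcc_of_le hρb] at hx
    have h1x : (0:ℝ) < 1 - x := by have := hIcc hx; simp only [mem_Iio] at this; linarith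
    have hcancel : (1 - x) ^ a * (1 - x) ^ (-a) = 1 := by
      rw [Real.rpow_neg h1x.le, mul_inv_cancel₀ (ne_of_gt (Real.rpow_pos_of_pos h1x a))]
    simp only [hΦ'def, hcancel]
    field_simp
    ring
  rw [intervalIntegral.integral_congr hEq]
  have hsplit : ∫ x in ρ..b, (1 - Φ' x) / a = ((b - ρ) - ∫ x in ρ..b, Φ' x) / a := by
    rw [intervalIntegral.integral_div]
    congr 1
    rw [intervalIntegral.integral_sub intervalIntegrable_const hΦ'int]
    simp
  rw [hsplit, hFTC]
  have hΦb : 0 ≤ (1 - b) ^ a * Fp a c b :=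
    mul_nonneg (Real.rpow_nonneg (by linarith) a) (Fp_nonneg (hcρ.trans hρb) hb1.le)
  gcongr
  linarith
lemma cast_base {ξ : ℝ} : ((1:ℂ) - (ξ:ℂ)^2) = ((1 - ξ^2 : ℝ) : ℂ) := by push_cast; ring

lemma base_pos {ξ : ℝ} (h0 : 0 < ξ) (h1 : ξ < 1) : (0:ℝ) < 1 - ξ^2 := by nlinarith

lemma abs_psi' {lam : ℂ} {ξ : ℝ} (h0 : 0 < ξ) (h1 : ξ < 1) :
    ‖ψ' lam ξ‖ = (ξ^2 * (1 - ξ^2) ^ lam.re)⁻¹ := by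
  unfold ψ'
  rw [norm_div, norm_one, norm_mul, cast_base,
    Complex.norm_cpow_eq_rpow_re_of_pos (base_pos h0 h1), norm_pow, Complex.norm_real, Real.norm_eq_abs,
    abs_of_pos h0, one_div]

lemma den_ne {lam : ℂ} {ξ : ℝ} (h0 : 0 < ξ) (h1 : ξ < 1) :
    (ξ:ℂ)^2 * ((1 : ℂ) - (ξ:ℂ)^2) ^ lam ≠ 0 := by
  apply mul_ne_zero
  · exact pow_ne_zero 2 (Complex.ofReal_ne_zero.2 (ne_of_gt h0))
  · rw [Ne, Complex.cpow_eq_zero_iff]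
    rintro ⟨h, -⟩
    rw [cast_base, Complex.ofReal_eq_zero] at h
    linarith [base_pos h0 h1]

lemma psi'_ne {lam : ℂ} {ξ : ℝ} (h0 : 0 < ξ) (h1 : ξ < 1) : ψ' lam ξ ≠ 0 :=
  one_div_ne_zero (den_ne h0 h1)

lemma cont_den {lam : ℂ} :
    ContinuousOn (fun ξ : ℝ => (ξ:ℂ)^2 * ((1 : ℂ) - (ξ:ℂ)^2) ^ lam) (Ioo (0:ℝ) 1) := by
  apply ContinuousOn.mul
  · exact ((Complex.continuous_ofReal.pow 2)).continuousOn
  · apply ContinuousOn.cpow_const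
    · exact (continuous_const.sub (Complex.continuous_ofReal.pow 2)).continuousOn
    · intro ξ hξ
      rw [Complex.mem_slitPlane_iff, cast_base]
      left
      simp only [Complex.ofReal_re]
      exact base_pos hξ.1 hξ.2

lemma cont_psi' {lam : ℂ} : ContinuousOn (ψ' lam) (Ioo (0:ℝ) 1) := by
  unfold ψ'
  exact ContinuousOn.div continuousOn_const cont_den fun ξ hξ => den_ne hξ.1 hξ.2

lemma cont_q {lam : ℂ} : ContinuousOn (q lam) (Ioo (0:ℝ) 1) := by
  unfold q
  apply ContinuousOn.add
  · apply ContinuousOn.div continuousOn_const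
      (continuous_const.sub (Complex.continuous_ofReal.pow 2)).continuousOn
    intro ξ hξ
    show (1:ℂ) - (ξ:ℂ)^2 ≠ 0
    rw [cast_base, Ne, Complex.ofReal_eq_zero]
    have := base_pos hξ.1 hξ.2
    intro h; linarith
  · apply ContinuousOn.div
    · apply Continuous.continuousOn
      apply Complex.continuous_ofReal.comp
      unfold f₀
      exact continuous_const.mul (Real.continuous_cos.comp
        (continuous_const.mul (continuous_const.mul Real.continuous_arctan)))
    · exact (((Complex.continuous_ofReal.pow 2)).continuousOn).mul
        ((continuous_const.sub (Complex.continuous_ofReal.pow 2)).continuousOn)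
    · intro ξ hξ
      apply mul_ne_zero (pow_ne_zero 2 (Complex.ofReal_ne_zero.2 (ne_of_gt hξ.1)))
      rw [cast_base, Ne, Complex.ofReal_eq_zero]
      have := base_pos hξ.1 hξ.2
      intro h; linarith

lemma cont_qd {lam : ℂ} :
    ContinuousOn (fun ξ : ℝ => ‖q lam ξ / ψ' lam ξ‖) (Ioo (0:ℝ) 1) :=
  continuous_norm.comp_continuousOn
    (ContinuousOn.div cont_q cont_psi' fun ξ hξ => psi'_ne hξ.1 hξ.2)

lemma cont_psi {lam : ℂ} {c b : ℝ} (hc0 : 0 < c) (hcb : c ≤ b) (hb1 : b < 1) :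
    ContinuousOn (ψ lam c) (Icc c b) := by
  have h : uIcc c b = Icc c b := uIcc_of_le hcb
  unfold ψ
  have := intervalIntegral.continuousOn_primitive_interval (a := c) (b := b)
    (f := fun ξ : ℝ => 1 / ((ξ:ℂ)^2 * ((1 : ℂ) - (ξ:ℂ)^2) ^ lam)) (μ := volume) ?_
  · rwa [h] at this
  · rw [h]
    apply ((cont_psi' (lam := lam)).mono ?_).integrableOn_compact isCompact_Icc
    intro x hx
    exact ⟨lt_of_lt_of_le hc0 hx.1, lt_of_le_of_lt hx.2 hb1⟩
lemma one_add_rpow_le {a ξ : ℝ} (ha : 0 ≤ a) (h0 : 0 ≤ ξ) (h1 : ξ ≤ 1) :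
    (1 + ξ) ^ (a - 1) ≤ 2 ^ a := by
  rcases le_or_gt 1 a with h | h
  · calc (1 + ξ) ^ (a - 1) ≤ 2 ^ (a - 1) :=
        Real.rpow_le_rpow (by linarith) (by linarith) (by linarith)
      _ ≤ 2 ^ a := Real.rpow_le_rpow_of_exponent_le one_le_two (by linarith)
  · calc (1 + ξ) ^ (a - 1) ≤ 1 :=
        Real.rpow_le_one_of_one_le_of_nonpos (by linarith) (by linarith)
      _ ≤ 2 ^ a := Real.one_le_rpow one_le_two ha

lemma bound_qd {lam : ℂ} {c ξ : ℝ} (ha : 0 ≤ lam.re) (hc0 : 0 < c) (hcξ : c ≤ ξ) (hξ1 : ξ < 1) :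
    ‖q lam ξ / ψ' lam ξ‖
      ≤ (‖lam * (1 + lam)‖ + 2 / c ^ 2) * 2 ^ lam.re * (1 - ξ) ^ (lam.re - 1) := by
  set a := lam.re with hadef
  set K := ‖lam * (1 + lam)‖ + 2 / c ^ 2 with hKdef
  have h0ξ : 0 < ξ := lt_of_lt_of_le hc0 hcξ
  have hb2 : (0:ℝ) < 1 - ξ^2 := base_pos h0ξ hξ1
  have h1ξ : (0:ℝ) < 1 - ξ := by linarith
  have hK0 : 0 ≤ K := add_nonneg (norm_nonneg _) (by positivity)
  have habs : ‖q lam ξ / ψ' lam ξ‖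
      = ‖q lam ξ‖ * (ξ^2 * (1 - ξ^2) ^ a) := by
    rw [norm_div, abs_psi' h0ξ hξ1, div_inv_eq_mul]
  have hq : ‖q lam ξ‖ ≤ K / (1 - ξ^2) := by
    unfold q
    have hA : ‖lam * (1 + lam) / ((1 : ℂ) - (ξ:ℂ)^2)‖
        = ‖lam * (1 + lam)‖ / (1 - ξ^2) := by
      rw [norm_div, cast_base, Complex.norm_real, Real.norm_eq_abs, abs_of_pos hb2]
    have hB : ‖((2 * Real.cos (2 * f₀ ξ) : ℝ) : ℂ)
          / ((ξ:ℂ)^2 * ((1 : ℂ) - (ξ:ℂ)^2))‖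
        ≤ 2 / (c^2 * (1 - ξ^2)) := by
      rw [norm_div, norm_mul, cast_base, norm_pow]
      simp only [Complex.norm_real, Real.norm_eq_abs]
      rw [abs_of_pos h0ξ, abs_of_pos hb2]
      apply div_le_div₀ (by norm_num) ?_ (by positivity) ?_
      · have h := Real.abs_cos_le_one (2 * f₀ ξ)
        rw [abs_mul, abs_two]
        nlinarith [abs_nonneg (Real.cos (2 * f₀ ξ))]
      · nlinarith [mul_le_mul_of_nonneg_right (show c^2 ≤ ξ^2 by nlinarith) hb2.le]
    calc ‖lam * (1 + lam) / ((1 : ℂ) - (ξ:ℂ)^2)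
            + ((2 * Real.cos (2 * f₀ ξ) : ℝ) : ℂ) / ((ξ:ℂ)^2 * ((1 : ℂ) - (ξ:ℂ)^2))‖
        ≤ ‖lam * (1 + lam)‖ / (1 - ξ^2) + 2 / (c^2 * (1 - ξ^2)) := by
          refine le_trans (norm_add_le _ _) ?_
          rw [hA]
          exact add_le_add le_rfl hB
      _ = K / (1 - ξ^2) := by
          rw [show (2:ℝ) / (c^2 * (1 - ξ^2)) = (2 / c^2) / (1 - ξ^2) from (div_div _ _ _).symm,
            ← add_div]
  rw [habs]
  have hstep1 : ‖q lam ξ‖ * (ξ^2 * (1 - ξ^2) ^ a)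
      ≤ (K / (1 - ξ^2)) * (1 - ξ^2) ^ a := by
    apply mul_le_mul hq ?_ (by positivity) (div_nonneg hK0 hb2.le)
    have hξ2 : ξ^2 ≤ 1 := by nlinarith
    nlinarith [Real.rpow_nonneg hb2.le a]
  refine le_trans hstep1 ?_
  have heq : (K / (1 - ξ^2)) * (1 - ξ^2) ^ a = K * (1 - ξ^2) ^ (a - 1) := by
    rw [Real.rpow_sub hb2, Real.rpow_one]
    field_simp
  rw [heq]
  have hfact : (1 - ξ^2 : ℝ) ^ (a - 1) = (1 - ξ) ^ (a - 1) * (1 + ξ) ^ (a - 1) := by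
    rw [← Real.mul_rpow h1ξ.le (by linarith)]
    congr 1
    ring
  rw [hfact]
  calc K * ((1 - ξ) ^ (a - 1) * (1 + ξ) ^ (a - 1))
      ≤ K * ((1 - ξ) ^ (a - 1) * 2 ^ a) := by
        apply mul_le_mul_of_nonneg_left ?_ hK0
        exact mul_le_mul_of_nonneg_left (one_add_rpow_le ha h0ξ.le hξ1.le)
          (Real.rpow_nonneg h1ξ.le _)
    _ = K * 2 ^ a * (1 - ξ) ^ (a - 1) := by ring

lemma bound_psi {lam : ℂ} {c ρ : ℝ} (ha : 0 ≤ lam.re) (hc0 : 0 < c) (hcρ : c ≤ ρ) (hρ1 : ρ < 1) :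
    ‖ψ lam c ρ‖ ≤ (c^2)⁻¹ * Fp lam.re c ρ := by
  set a := lam.re with hadef
  have hsub : Icc c ρ ⊆ Ioo (0:ℝ) 1 := fun x hx =>
    ⟨lt_of_lt_of_le hc0 hx.1, lt_of_le_of_lt hx.2 hρ1⟩
  have h1 : ‖ψ lam c ρ‖ ≤ ∫ t in c..ρ, ‖ψ' lam t‖ := by
    unfold ψ ψ'
    refine le_trans (intervalIntegral.norm_integral_le_integral_norm hcρ) ?_
    exact le_rfl
  refine le_trans h1 ?_
  have hptwise : ∀ t ∈ Icc c ρ, ‖ψ' lam t‖ ≤ (c^2)⁻¹ * (1 - t) ^ (-a) := by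
    intro t ht
    have h0t : 0 < t := (hsub ht).1
    have ht1 : t < 1 := (hsub ht).2
    have h1t : (0:ℝ) < 1 - t := by linarith
    have hb2 : (0:ℝ) < 1 - t^2 := base_pos h0t ht1
    rw [abs_psi' h0t ht1]
    have hle : c^2 * (1 - t) ^ a ≤ t^2 * (1 - t^2) ^ a := by
      apply mul_le_mul ?_ ?_ (Real.rpow_nonneg h1t.le a) (by positivity)
      · nlinarith [ht.1]
      · exact Real.rpow_le_rpow h1t.le (by nlinarith) ha
    refine le_trans (inv_anti₀ (by positivity) hle) ?_
    rw [mul_inv, Real.rpow_neg h1t.le]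
  have hint1 : IntervalIntegrable (fun t => ‖ψ' lam t‖) volume c ρ := by
    apply ContinuousOn.intervalIntegrable_of_Icc hcρ
    exact continuous_norm.comp_continuousOn (cont_psi'.mono hsub)
  have hint2 : IntervalIntegrable (fun t : ℝ => (c^2)⁻¹ * (1 - t) ^ (-a)) volume c ρ := by
    apply ContinuousOn.intervalIntegrable_of_Icc hcρ
    exact continuousOn_const.mul (wcont.mono fun x hx => (hsub hx).2)
  refine le_trans (intervalIntegral.integral_mono_on hcρ hint1 hint2 hptwise) ?_
  rw [intervalIntegral.integral_const_mul]
  simp only [Fp]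
  exact le_rfl
theorem alpha_tendsto_zero_at_one (lam : ℂ) (hlam : 0 < lam.re)
    (c : ℝ) (hc : c ∈ Set.Ioo (0:ℝ) 1) :
    Filter.Tendsto (α lam c) (nhdsWithin 1 (Set.Iio (1:ℝ))) (nhds 0) := by
  obtain ⟨hc0, hc1⟩ := hc
  set a := lam.re with hadef
  have ha : 0 < a := hlam
  set Cq := (‖lam * (1 + lam)‖ + 2 / c ^ 2) * 2 ^ a with hCqdef
  have hCq0 : 0 ≤ Cq :=
    mul_nonneg (add_nonneg (norm_nonneg _) (by positivity))
      (Real.rpow_nonneg (by norm_num) a)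
  set C2 := Cq * (c ^ 2)⁻¹ with hC2def
  have hC20 : 0 ≤ C2 := mul_nonneg hCq0 (by positivity)
  have hG := G_tendsto (a := a) (c := c) ha hc1
  have hBtend : Tendsto (fun ρ => (C2 / a) * ((1 - ρ) + (1 - ρ) ^ a * Fp a c ρ)
      + (C2 / a) * ((1 - ρ) ^ a * Fp a c ρ)) (nhdsWithin 1 (Iio (1:ℝ))) (nhds 0) := by
    have hsub : Tendsto (fun ρ : ℝ => 1 - ρ) (nhdsWithin 1 (Iio (1:ℝ))) (nhds 0) := by
      have h0 : Tendsto (fun ρ : ℝ => 1 - ρ) (nhds 1) (nhds (1 - 1)) :=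
        (continuous_const.sub continuous_id).tendsto 1
      simpa using h0.mono_left nhdsWithin_le_nhds
    have := ((hsub.add hG).const_mul (C2 / a)).add (hG.const_mul (C2 / a))
    simpa using this
  apply squeeze_zero' ?_ ?_ hBtend
  · filter_upwards [Ioo_mem_nhdsLT_of_mem (show (1:ℝ) ∈ Ioc c 1 from ⟨hc1, le_rfl⟩)] with ρ hρ
    have hρ1 : ρ ≤ 1 := hρ.2.le
    have t1 : 0 ≤ ∫ ξ in ρ..1, ‖ψ lam c ξ * q lam ξ / ψ' lam ξ‖ :=
      intervalIntegral.integral_nonneg hρ1 fun u _ => norm_nonneg _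
    have t2 : 0 ≤ ∫ ξ in ρ..1, ‖q lam ξ / ψ' lam ξ‖ :=
      intervalIntegral.integral_nonneg hρ1 fun u _ => norm_nonneg _
    exact add_nonneg t1 (mul_nonneg (norm_nonneg _) t2)
  · filter_upwards [Ioo_mem_nhdsLT_of_mem (show (1:ℝ) ∈ Ioc c 1 from ⟨hc1, le_rfl⟩)] with ρ hρ
    obtain ⟨hcρ, hρ1⟩ := hρ
    have hcρ' : c ≤ ρ := hcρ.le
    have h0ρ : 0 < ρ := lt_trans hc0 hcρ
    have hsubI : ∀ b', b' ∈ Ico ρ (1:ℝ) → Icc ρ b' ⊆ Ioo (0:ℝ) 1 := fun b' hb' x hx =>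
      ⟨lt_of_lt_of_le h0ρ hx.1, lt_of_le_of_lt hx.2 hb'.2⟩
    have hrpc : ∀ (p : ℝ) (b' : ℝ), b' < 1 →
        ContinuousOn (fun ξ : ℝ => (1 - ξ) ^ p) (Icc ρ b') := by
      intro p b' hb'
      apply ContinuousOn.rpow_const (by fun_prop)
      intro x hx
      have : x < 1 := lt_of_le_of_lt hx.2 hb'
      exact Or.inl (by intro h; rw [sub_eq_zero] at h; linarith)
    -- Term 2 integral bound
    have hT2int : (∫ ξ in ρ..1, ‖q lam ξ / ψ' lam ξ‖) ≤ Cq * (1 - ρ) ^ a / a := by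
      apply tail_lemma hρ1 (fun x => norm_nonneg _)
      · intro b hb
        exact ((cont_qd.mono (hsubI b hb)).integrableOn_compact isCompact_Icc).mono_set
          Ioc_subset_Icc_self
      · intro b hb
        rw [← intervalIntegral.integral_of_le hb.1]
        have hintf : IntervalIntegrable (fun ξ => ‖q lam ξ / ψ' lam ξ‖) volume ρ b :=
          (cont_qd.mono (hsubI b hb)).intervalIntegrable_of_Icc hb.1
        have hintg : IntervalIntegrable (fun ξ : ℝ => Cq * (1 - ξ) ^ (a - 1)) volume ρ b :=
          (continuousOn_const.mul (hrpc (a - 1) b hb.2)).intervalIntegrable_of_Icc hb.1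
        have hptw : ∀ ξ ∈ Icc ρ b,
            ‖q lam ξ / ψ' lam ξ‖ ≤ Cq * (1 - ξ) ^ (a - 1) := by
          intro ξ hξ
          exact bound_qd ha.le hc0 (hcρ'.trans hξ.1) (lt_of_le_of_lt hξ.2 hb.2)
        calc (∫ ξ in ρ..b, ‖q lam ξ / ψ' lam ξ‖)
            ≤ ∫ ξ in ρ..b, Cq * (1 - ξ) ^ (a - 1) :=
              intervalIntegral.integral_mono_on hb.1 hintf hintg hptw
          _ = Cq * (((1 - ρ) ^ a - (1 - b) ^ a) / a) := by
              rw [intervalIntegral.integral_const_mul, int_one_sub_rpow ha]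
          _ ≤ Cq * ((1 - ρ) ^ a / a) := by
              apply mul_le_mul_of_nonneg_left ?_ hCq0
              have h4 : (0:ℝ) ≤ (1 - b) ^ a / a :=
                div_nonneg (Real.rpow_nonneg (by linarith [hb.2]) a) ha.le
              rw [sub_div]
              linarith
          _ = Cq * (1 - ρ) ^ a / a := by ring
    -- Term 1 bound
    have hcont1 : ∀ b, b ∈ Ico ρ (1:ℝ) →
        ContinuousOn (fun ξ => ‖ψ lam c ξ * q lam ξ / ψ' lam ξ‖) (Icc ρ b) := by
      intro b hb
      apply continuous_norm.comp_continuousOn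
      apply ContinuousOn.div
      · apply ContinuousOn.mul
        · exact (cont_psi hc0 (hcρ'.trans hb.1) hb.2).mono (Icc_subset_Icc hcρ' le_rfl)
        · exact cont_q.mono (hsubI b hb)
      · exact cont_psi'.mono (hsubI b hb)
      · intro x hx
        exact psi'_ne (hsubI b hb hx).1 (hsubI b hb hx).2
    have hT1 : (∫ ξ in ρ..1, ‖ψ lam c ξ * q lam ξ / ψ' lam ξ‖)
        ≤ (C2 / a) * ((1 - ρ) + (1 - ρ) ^ a * Fp a c ρ) := by
      apply tail_lemma hρ1 (fun x => norm_nonneg _)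
      · intro b hb
        exact ((hcont1 b hb).integrableOn_compact isCompact_Icc).mono_set Ioc_subset_Icc_self
      · intro b hb
        rw [← intervalIntegral.integral_of_le hb.1]
        have hFpc : ContinuousOn (Fp a c) (Icc ρ b) := by
          apply (Fp_contOn hc1 hb.2).mono
          rw [uIcc_of_le (hcρ'.trans hb.1)]
          exact Icc_subset_Icc hcρ' le_rfl
        have hintf : IntervalIntegrable
            (fun ξ => ‖ψ lam c ξ * q lam ξ / ψ' lam ξ‖) volume ρ b :=
          (hcont1 b hb).intervalIntegrable_of_Icc hb.1
        have hintg : IntervalIntegrable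
            (fun ξ : ℝ => C2 * (Fp a c ξ * (1 - ξ) ^ (a - 1))) volume ρ b :=
          (continuousOn_const.mul (hFpc.mul (hrpc (a - 1) b hb.2))).intervalIntegrable_of_Icc hb.1
        have hptw : ∀ ξ ∈ Icc ρ b, ‖ψ lam c ξ * q lam ξ / ψ' lam ξ‖
            ≤ C2 * (Fp a c ξ * (1 - ξ) ^ (a - 1)) := by
          intro ξ hξ
          have h1 : c ≤ ξ := hcρ'.trans hξ.1
          have h2 : ξ < 1 := lt_of_le_of_lt hξ.2 hb.2
          have hmm := mul_le_mul (bound_psi ha.le hc0 h1 h2) (bound_qd ha.le hc0 h1 h2)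
            (norm_nonneg _) (mul_nonneg (by positivity) (Fp_nonneg h1 h2.le))
          calc ‖ψ lam c ξ * q lam ξ / ψ' lam ξ‖
              = ‖ψ lam c ξ‖ * ‖q lam ξ / ψ' lam ξ‖ := by
                rw [mul_div_assoc, norm_mul]
            _ ≤ ((c ^ 2)⁻¹ * Fp a c ξ)
                * ((‖lam * (1 + lam)‖ + 2 / c ^ 2) * 2 ^ a * (1 - ξ) ^ (a - 1)) := hmm
            _ = C2 * (Fp a c ξ * (1 - ξ) ^ (a - 1)) := by rw [hC2def, hCqdef]; ring
        calc (∫ ξ in ρ..b, ‖ψ lam c ξ * q lam ξ / ψ' lam ξ‖)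
            ≤ ∫ ξ in ρ..b, C2 * (Fp a c ξ * (1 - ξ) ^ (a - 1)) :=
              intervalIntegral.integral_mono_on hb.1 hintf hintg hptw
          _ = C2 * ∫ ξ in ρ..b, Fp a c ξ * (1 - ξ) ^ (a - 1) := by
              rw [intervalIntegral.integral_const_mul]
          _ ≤ C2 * (((1 - ρ) + (1 - ρ) ^ a * Fp a c ρ) / a) :=
              mul_le_mul_of_nonneg_left (H_int_le ha hc1 hcρ' hb.1 hb.2) hC20
          _ = (C2 / a) * ((1 - ρ) + (1 - ρ) ^ a * Fp a c ρ) := by ring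
    -- Term 2 full bound
    have hT2 : ‖ψ lam c ρ‖ * (∫ ξ in ρ..1, ‖q lam ξ / ψ' lam ξ‖)
        ≤ (C2 / a) * ((1 - ρ) ^ a * Fp a c ρ) := by
      have hintnn : 0 ≤ ∫ ξ in ρ..1, ‖q lam ξ / ψ' lam ξ‖ :=
        intervalIntegral.integral_nonneg hρ1.le fun u _ => norm_nonneg _
      calc ‖ψ lam c ρ‖ * (∫ ξ in ρ..1, ‖q lam ξ / ψ' lam ξ‖)
          ≤ ((c ^ 2)⁻¹ * Fp a c ρ) * (Cq * (1 - ρ) ^ a / a) :=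
            mul_le_mul (bound_psi ha.le hc0 hcρ' hρ1) hT2int hintnn
              (mul_nonneg (by positivity) (Fp_nonneg hcρ' hρ1.le))
        _ = (C2 / a) * ((1 - ρ) ^ a * Fp a c ρ) := by rw [hC2def]; ring
    exact add_le_add hT1 hT2
end

section
/- Suppose λ > -2, λ ≠ 1, and u is a nontrivial real C²[0,1] solution of u'' + (2/ρ - 2λρ/(1-ρ²))u' - (2cos(2f₀)/(ρ²(1-ρ²)) + λ(1+λ)/(1-ρ²))u = 0 with u(0) = 0, and suppose u satisfies the integral identity ∫₀¹ (θ(ξ)/W(θ,χ)(ξ))·Q_λu(ξ)dξ = 0, where Q_λu(ρ) = (1/(1-ρ²))(2(λ-1)ρu'(ρ) + (λ(1+λ)-2)u(ρ)), θ(ρ) = 2ρ/(1+ρ²), W(θ,χ)(ρ) = -6/(ρ²(1-ρ²)). Then u' changes sign on (0,1). -/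
open Set intervalIntegral

noncomputable def reducedIntegrand (lam : ℝ) (u : ℝ → ℝ) (ρ : ℝ) : ℝ :=
  ρ ^ 3 / (1 + ρ ^ 2) * (2 * ρ * derivWithin u (Icc 0 1) ρ + (lam + 2) * u ρ)

lemma reducedIntegrand_neg (lam : ℝ) (u : ℝ → ℝ) :
    reducedIntegrand lam (fun x => -u x) = -reducedIntegrand lam u := by
  funext ρ
  simp only [reducedIntegrand, derivWithin.fun_neg, Pi.neg_apply]
  ring

lemma theta_div_wronskian_mul_Q_eq (lam x d v : ℝ) (hx : x ≠ 0) (hx' : 1 - x ^ 2 ≠ 0) :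
    ((2 * x / (1 + x ^ 2)) / (-6 / (x ^ 2 * (1 - x ^ 2)))) * ((1 / (1 - x ^ 2))
        * (2 * (lam - 1) * x * d + (lam * (1 + lam) - 2) * v))
      = (1 - lam) / 3 * (x ^ 3 / (1 + x ^ 2) * (2 * x * d + (lam + 2) * v)) := by
  have : 1 + x ^ 2 ≠ 0 := by positivity
  field_simp
  ring

lemma integral_theta_div_wronskian_mul_Q (lam : ℝ) (u : ℝ → ℝ) :
    ∫ ρ in (0:ℝ)..1,
        ((2 * ρ / (1 + ρ^2)) / (-6 / (ρ^2 * (1 - ρ^2)))) * ((1 / (1 - ρ^2))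
          * (2 * (lam - 1) * ρ * deriv u ρ + (lam * (1 + lam) - 2) * u ρ))
      = (1 - lam) / 3 * ∫ ρ in (0:ℝ)..1, reducedIntegrand lam u ρ := by
  rw [← integral_const_mul]
  refine integral_congr_uIoo fun ρ hρ => ?_
  rw [uIoo_of_le zero_le_one] at hρ
  have hρ' : 1 - ρ ^ 2 ≠ 0 := by nlinarith [hρ.1, hρ.2]
  rw [theta_div_wronskian_mul_Q_eq lam ρ _ _ hρ.1.ne' hρ', reducedIntegrand,
    derivWithin_of_mem_nhds (Icc_mem_nhds hρ.1 hρ.2)]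

lemma integral_reducedIntegrand_pos {lam : ℝ} (hlam : -2 < lam) {u : ℝ → ℝ}
    (hu : ContDiffOn ℝ 1 u (Icc 0 1)) (hmono : MonotoneOn u (Icc 0 1)) (h0 : u 0 = 0)
    (hne : ∃ ρ ∈ Icc (0:ℝ) 1, u ρ ≠ 0) :
    0 < ∫ ρ in (0:ℝ)..1, reducedIntegrand lam u ρ := by
  have hu_nonneg : ∀ ρ ∈ Icc (0:ℝ) 1, 0 ≤ u ρ := fun ρ hρ =>
    h0 ▸ hmono (left_mem_Icc.mpr zero_le_one) hρ hρ.1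
  have hcont : ContinuousOn (reducedIntegrand lam u) (Icc 0 1) := by
    have hderiv_cont := hu.continuousOn_derivWithin (uniqueDiffOn_Icc one_pos) le_rfl
    have hu_cont := hu.continuousOn
    unfold reducedIntegrand
    fun_prop (disch := intro x _; positivity)
  refine integral_pos one_pos hcont (fun ρ hρ => ?_) ?_
  · have hρ0 : 0 ≤ ρ := hρ.1.le
    exact mul_nonneg (by positivity) (add_nonneg
      (mul_nonneg (by positivity) hmono.derivWithin_nonneg)
      (mul_nonneg (by linarith) (hu_nonneg ρ (Ioc_subset_Icc_self hρ))))
  · obtain ⟨ρ, hρ, huρ⟩ := hne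
    have hρ0 : 0 < ρ := hρ.1.lt_of_ne (by rintro rfl; exact huρ h0)
    have huρ' : 0 < u ρ := (hu_nonneg ρ hρ).lt_of_ne' huρ
    exact ⟨ρ, hρ, mul_pos (by positivity) (add_pos_of_nonneg_of_pos
      (mul_nonneg (by positivity) hmono.derivWithin_nonneg) (mul_pos (by linarith) huρ'))⟩

lemma integral_reducedIntegrand_ne_zero {lam : ℝ} (hlam : -2 < lam) {u : ℝ → ℝ}
    (hu : ContDiffOn ℝ 1 u (Icc 0 1))
    (hmono : MonotoneOn u (Icc 0 1) ∨ AntitoneOn u (Icc 0 1)) (h0 : u 0 = 0)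
    (hne : ∃ ρ ∈ Icc (0:ℝ) 1, u ρ ≠ 0) :
    ∫ ρ in (0:ℝ)..1, reducedIntegrand lam u ρ ≠ 0 := by
  rcases hmono with hmono | hanti
  · exact (integral_reducedIntegrand_pos hlam hu hmono h0 hne).ne'
  · obtain ⟨ρ, hρ, huρ⟩ := hne
    have := integral_reducedIntegrand_pos hlam hu.neg hanti.neg (by simp [h0])
      ⟨ρ, hρ, by simpa using huρ⟩
    rw [reducedIntegrand_neg] at this
    simp only [Pi.neg_apply, integral_neg, neg_pos] at this
    exact this.ne

lemma monotoneOn_or_antitoneOn_of_deriv_mul_nonneg {u : ℝ → ℝ} {a b : ℝ}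
    (hu : ContinuousOn u (Icc a b)) (hd : DifferentiableOn ℝ u (Ioo a b))
    (hsign : ∀ x ∈ Ioo a b, ∀ y ∈ Ioo a b, 0 ≤ deriv u x * deriv u y) :
    MonotoneOn u (Icc a b) ∨ AntitoneOn u (Icc a b) := by
  rw [← interior_Icc] at hd hsign
  by_cases hneg : ∃ y ∈ interior (Icc a b), deriv u y < 0
  · obtain ⟨y, hy, hy'⟩ := hneg
    exact .inr <| antitoneOn_of_deriv_nonpos (convex_Icc a b) hu hd fun x hx =>
      nonpos_of_mul_nonneg_left (hsign x hx y hy) hy'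
  · push Not at hneg
    exact .inl <| monotoneOn_of_deriv_nonneg (convex_Icc a b) hu hd hneg

theorem derivative_changes_sign_general (lam : ℝ) (h2 : -2 < lam) (h1 : lam ≠ 1)
    (u : ℝ → ℝ)
    (hu : ContDiffOn ℝ 2 u (Set.Icc (0:ℝ) 1))
    (hne : ∃ ρ ∈ Set.Icc (0:ℝ) 1, u ρ ≠ 0)
    (h0 : u 0 = 0)
    (hint : ∫ ρ in (0:ℝ)..1,
        ((2 * ρ / (1 + ρ^2)) / (-6 / (ρ^2 * (1 - ρ^2)))) * ((1 / (1 - ρ^2))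
          * (2 * (lam - 1) * ρ * deriv u ρ + (lam * (1 + lam) - 2) * u ρ)) = 0) :
    ∃ a ∈ Set.Ioo (0:ℝ) 1, ∃ b ∈ Set.Ioo (0:ℝ) 1, deriv u a * deriv u b < 0 := by
  by_contra! hsign
  have hu1 : ContDiffOn ℝ 1 u (Icc 0 1) := hu.of_le one_le_two
  have hmono := monotoneOn_or_antitoneOn_of_deriv_mul_nonneg hu1.continuousOn
    ((hu1.differentiableOn one_ne_zero).mono Ioo_subset_Icc_self) hsign
  rw [integral_theta_div_wronskian_mul_Q, mul_eq_zero] at hint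
  rcases hint with hlam | hzero
  · exact h1 (by linarith)
  · exact integral_reducedIntegrand_ne_zero h2 hu1 hmono h0 hne hzero

theorem derivative_changes_sign (lam : ℝ) (h2 : -2 < lam) (h1 : lam ≠ 1)
    (u : ℝ → ℝ)
    (hu : ContDiffOn ℝ 2 u (Set.Icc (0:ℝ) 1))
    (hne : ∃ ρ ∈ Set.Icc (0:ℝ) 1, u ρ ≠ 0)
    (h0 : u 0 = 0)
    (heq : ∀ ρ ∈ Set.Ioo (0:ℝ) 1,
      deriv (deriv u) ρ + (2 / ρ - 2 * lam * ρ / (1 - ρ^2)) * deriv u ρ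
        - (2 * Real.cos (2 * f₀ ρ) / (ρ^2 * (1 - ρ^2)) + lam * (1 + lam) / (1 - ρ^2)) * u ρ = 0)
    (hint : ∫ ρ in (0:ℝ)..1,
        ((2 * ρ / (1 + ρ^2)) / (-6 / (ρ^2 * (1 - ρ^2)))) * ((1 / (1 - ρ^2))
          * (2 * (lam - 1) * ρ * deriv u ρ + (lam * (1 + lam) - 2) * u ρ)) = 0) :
    ∃ a ∈ Set.Ioo (0:ℝ) 1, ∃ b ∈ Set.Ioo (0:ℝ) 1, deriv u a * deriv u b < 0 :=
  derivative_changes_sign_general lam h2 h1 u hu hne h0 hint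
end
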